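/- Let A be the lazy renewal matrix. For every positive integer n, lim_{m→∞} (1/m)·log |L(m,n)| = log((3+√5)/2), where |L(m,n)| is the number of admissible words of length m whose last letter is at most n. -/

import Mathlib

def Adm (A : ℕ+ → ℕ+ → Bool) (w : List ℕ+) : Prop :=
  List.Chain' (fun a b => A a b = true) w

/-- `L(m,n)`: admissible words of length `m` whose last letter is at most `n`. -/
def LWords (A : ℕ+ → ℕ+ → Bool) (m : ℕ) (n : ℕ+) : Set (List ℕ+) :=
  {w : List ℕ+ | w.length = m ∧ Adm A w ∧ ∀ x ∈ w.getLast?, x ≤ n}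

def lazyRenewal (i j : ℕ+) : Bool :=
  decide (i = 1 ∨ (j : ℕ) + 1 = (i : ℕ) ∨ j = i)

/-!
Sorting admissible words by their last letter, the words of length `m + 1` ending in `j` are
obtained from those of length `m` ending in a predecessor of `j`; for the lazy renewal matrix
the predecessors of `j` are `1`, `j` and `j + 1`. This gives `F (2m+1)` words ending in `1` and
`F (2m+2)` words ending in any `j ≥ 2` (Fibonacci numbers), so
`F (2m+1) ≤ |L(m+1,n)| ≤ n F (2m+2)`, and both bounds grow like `φ ^ (2m) = ((3 + √5)/2) ^ m`.
-/

open Filter Topology Real Finset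

section EndingWords

variable {A : ℕ+ → ℕ+ → Bool} (P : ℕ+ → Finset ℕ+)

def endingWords : ℕ → ℕ+ → Finset (List ℕ+)
  | 0, j => {[j]}
  | m + 1, j => ((P j).biUnion (endingWords m)).image (· ++ [j])

lemma adm_append_singleton {v : List ℕ+} {j : ℕ+} :
    Adm A (v ++ [j]) ↔ Adm A v ∧ ∀ i ∈ v.getLast?, A i j = true := by
  change List.IsChain _ (v ++ [j]) ↔ List.IsChain _ v ∧ _
  simp [List.isChain_append]

variable {P}

lemma getLast?_of_mem_endingWords {m : ℕ} {j : ℕ+} {w : List ℕ+} (hw : w ∈ endingWords P m j) :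
    w.getLast? = some j := by
  cases m with
  | zero => simp_all [endingWords]
  | succ m =>
    obtain ⟨v, -, rfl⟩ := Finset.mem_image.mp hw
    exact List.getLast?_concat

lemma pairwiseDisjoint_endingWords (m : ℕ) (s : Set ℕ+) : s.PairwiseDisjoint (endingWords P m) :=
  fun _ _ _ _ hii' => Finset.disjoint_left.mpr fun _ hw hw' =>
    hii' (Option.some_injective _
      ((getLast?_of_mem_endingWords hw).symm.trans (getLast?_of_mem_endingWords hw')))

lemma card_endingWords_succ (m : ℕ) (j : ℕ+) :
    #(endingWords P (m + 1) j) = ∑ i ∈ P j, #(endingWords P m i) := by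
  rw [endingWords, card_image_of_injective _ (List.append_left_injective [j]),
    card_biUnion (pairwiseDisjoint_endingWords m _)]

lemma mem_endingWords (hP : ∀ i j, i ∈ P j ↔ A i j = true) {m : ℕ} {j : ℕ+} {w : List ℕ+} :
    w ∈ endingWords P m j ↔ w.length = m + 1 ∧ Adm A w ∧ w.getLast? = some j := by
  induction m generalizing j w with
  | zero =>
    constructor
    · intro hw
      rw [endingWords, mem_singleton] at hw
      subst hw
      exact ⟨rfl, List.isChain_singleton j, rfl⟩
    · rintro ⟨hlen, -, hlast⟩
      obtain ⟨a, rfl⟩ := List.length_eq_one_iff.mp hlen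
      simp_all [endingWords]
  | succ m ih =>
    simp only [endingWords, mem_image, mem_biUnion]
    constructor
    · rintro ⟨v, ⟨i, hi, hv⟩, rfl⟩
      obtain ⟨hlen, hadm, hlast⟩ := ih.mp hv
      refine ⟨by simp [hlen], adm_append_singleton.mpr ⟨hadm, ?_⟩, List.getLast?_concat⟩
      simpa [hlast] using (hP i j).mp hi
    · rintro ⟨hlen, hadm, hlast⟩
      obtain ⟨v, x, rfl⟩ :=
        (List.eq_nil_or_concat' w).resolve_left (List.ne_nil_of_length_eq_add_one hlen)
      obtain rfl : x = j := by simpa using hlast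
      obtain ⟨i, hi⟩ := Option.isSome_iff_exists.mp
        (List.getLast?_isSome.mpr (List.ne_nil_of_length_eq_add_one (by simpa using hlen)))
      rw [adm_append_singleton] at hadm
      exact ⟨v, ⟨i, (hP i x).mpr (hadm.2 i hi), ih.mpr ⟨by simpa using hlen, hadm.1, hi⟩⟩, rfl⟩

lemma LWords_succ_eq_biUnion (hP : ∀ i j, i ∈ P j ↔ A i j = true) (m : ℕ) (n : ℕ+) :
    LWords A (m + 1) n = ↑((Icc 1 n).biUnion (endingWords P m)) := by
  ext w
  simp only [LWords, Set.mem_ofPred_eq, coe_biUnion, coe_Icc, Set.mem_iUnion, Set.mem_Icc,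
    mem_coe, mem_endingWords hP, exists_prop]
  constructor
  · rintro ⟨hlen, hadm, hlast⟩
    obtain ⟨j, hj⟩ := Option.isSome_iff_exists.mp
      (List.getLast?_isSome.mpr (List.ne_nil_of_length_eq_add_one hlen))
    exact ⟨j, ⟨one_le, hlast j hj⟩, hlen, hadm, hj⟩
  · rintro ⟨j, ⟨-, hjn⟩, hlen, hadm, hj⟩
    exact ⟨hlen, hadm, by simpa [hj] using hjn⟩

lemma ncard_LWords_succ (hP : ∀ i j, i ∈ P j ↔ A i j = true) (m : ℕ) (n : ℕ+) :
    (LWords A (m + 1) n).ncard = ∑ j ∈ Icc 1 n, #(endingWords P m j) := by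
  rw [LWords_succ_eq_biUnion hP, Set.ncard_coe_finset,
    card_biUnion (pairwiseDisjoint_endingWords m _)]

end EndingWords

lemma fib_succ_le_goldenRatio_pow (n : ℕ) : (Nat.fib (n + 1) : ℝ) ≤ goldenRatio ^ n := by
  have h := goldenRatio_mul_fib_succ_add_fib n
  rw [pow_succ'] at h
  exact le_of_mul_le_mul_left (by linarith [(Nat.fib n).cast_nonneg (α := ℝ)]) goldenRatio_pos

lemma goldenRatio_pow_succ_le_sq_mul_fib (n : ℕ) :
    goldenRatio ^ (n + 1) ≤ goldenRatio ^ 2 * Nat.fib (n + 1) := by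
  rw [← goldenRatio_mul_fib_succ_add_fib, goldenRatio_sq, add_mul, one_mul]
  have : (Nat.fib n : ℝ) ≤ Nat.fib (n + 1) := by exact_mod_cast Nat.fib_le_fib_succ
  linarith

def lazyPreds (j : ℕ+) : Finset ℕ+ := {1, j + 1, j}

lemma mem_lazyPreds {i j : ℕ+} : i ∈ lazyPreds j ↔ lazyRenewal i j = true := by
  simp only [lazyPreds, lazyRenewal, mem_insert, mem_singleton, decide_eq_true_eq,
    ← PNat.coe_inj, PNat.add_coe, PNat.val_ofNat]
  omega

lemma card_endingWords_lazyPreds (m : ℕ) (j : ℕ+) :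
    #(endingWords lazyPreds m j) = if j = 1 then Nat.fib (2 * m + 1) else Nat.fib (2 * m + 2) := by
  induction m generalizing j with
  | zero => simp [endingWords]
  | succ m ih =>
    have hodd : Nat.fib (2 * (m + 1) + 1) = Nat.fib (2 * m + 1) + Nat.fib (2 * m + 2) :=
      Nat.fib_add_two
    have heven : Nat.fib (2 * (m + 1) + 2) = Nat.fib (2 * m + 2) + Nat.fib (2 * (m + 1) + 1) :=
      Nat.fib_add_two
    rw [card_endingWords_succ]
    by_cases hj : j = 1
    · subst hj
      rw [show lazyPreds 1 = {1, 2} by decide, sum_pair (by decide), ih, ih, if_pos rfl,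
        if_neg (by decide), if_pos rfl, hodd]
    · have h1 : (1 : ℕ+) ∉ ({j + 1, j} : Finset ℕ+) := by
        simp [← PNat.coe_inj, Ne.symm hj]
      have h2 : j + 1 ≠ j := by simp [← PNat.coe_inj]
      rw [lazyPreds, sum_insert h1, sum_pair h2, ih, ih, ih, if_pos rfl, if_neg hj, if_neg hj,
        if_neg (by simp [← PNat.coe_inj]), heven, hodd]
      ring

lemma fib_le_ncard_LWords_lazyRenewal (m : ℕ) (n : ℕ+) :
    Nat.fib (2 * m + 1) ≤ (LWords lazyRenewal (m + 1) n).ncard := by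
  rw [ncard_LWords_succ (fun _ _ => mem_lazyPreds)]
  calc Nat.fib (2 * m + 1) = #(endingWords lazyPreds m 1) := by
        rw [card_endingWords_lazyPreds, if_pos rfl]
    _ ≤ ∑ j ∈ Icc 1 n, #(endingWords lazyPreds m j) :=
      single_le_sum (f := fun j => #(endingWords lazyPreds m j)) (fun _ _ => Nat.zero_le _)
        (mem_Icc.mpr ⟨le_rfl, one_le⟩)

lemma ncard_LWords_lazyRenewal_le (m : ℕ) (n : ℕ+) :
    (LWords lazyRenewal (m + 1) n).ncard ≤ n * Nat.fib (2 * m + 2) := by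
  rw [ncard_LWords_succ (fun _ _ => mem_lazyPreds)]
  calc _ ≤ #(Icc 1 n) • Nat.fib (2 * m + 2) := by
        refine sum_le_card_nsmul _ _ _ fun j _ => ?_
        rw [card_endingWords_lazyPreds]
        split_ifs
        exacts [Nat.fib_mono (by omega), le_rfl]
    _ = n * Nat.fib (2 * m + 2) := by simp

lemma tendsto_log_div_of_pow_bounds {a : ℕ → ℝ} {r c C : ℝ} (hr : 0 < r) (hc : 0 < c)
    (hlow : ∀ᶠ m in atTop, r ^ m ≤ c * a m) (hup : ∀ᶠ m in atTop, a m ≤ C * r ^ m) :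
    Tendsto (fun m : ℕ => log (a m) / m) atTop (𝓝 (log r)) := by
  have hpos : ∀ᶠ m in atTop, 0 < a m :=
    hlow.mono fun m hm => pos_of_mul_pos_right ((pow_pos hr m).trans_le hm) hc.le
  have hlim (b : ℝ) : Tendsto (fun m : ℕ => (b + log r * m) / m) atTop (𝓝 (log r)) := by
    simpa using tendsto_add_mul_div_add_mul_atTop_nhds b 0 (log r) one_ne_zero
  refine tendsto_of_tendsto_of_tendsto_of_le_of_le' (hlim (-log c)) (hlim (log C)) ?_ ?_
  · filter_upwards [hlow, hpos] with m hm ha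
    gcongr
    have := log_le_log (pow_pos hr m) hm
    rw [log_mul hc.ne' ha.ne', log_pow] at this
    linarith
  · filter_upwards [hup, hpos] with m hm ha
    have hC : 0 < C := pos_of_mul_pos_left (ha.trans_le hm) (pow_pos hr m).le
    gcongr
    have := log_le_log ha hm
    rw [log_mul hC.ne' (pow_pos hr m).ne', log_pow] at this
    linarith

/-- for the lazy renewal matrix, for every positive integer `n`,
`lim_{m→∞} (1/m)·log |L(m,n)| = log((3+√5)/2)`. -/
theorem stmt15 (n : ℕ+) :
    Filter.Tendsto (fun m : ℕ => Real.log ((LWords lazyRenewal m n).ncard) / (m : ℝ))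
      Filter.atTop (nhds (Real.log ((3 + Real.sqrt 5) / 2))) := by
  have hsq : (3 + Real.sqrt 5) / 2 = goldenRatio ^ 2 := by
    rw [goldenRatio_sq, goldenRatio]; ring
  rw [hsq]
  refine tendsto_log_div_of_pow_bounds (by positivity) (c := goldenRatio ^ 3) (by positivity)
    ?_ (C := n) ?_ <;> filter_upwards [eventually_ge_atTop 1] with m hm <;>
    obtain ⟨k, rfl⟩ := Nat.exists_eq_add_of_le' hm
  · calc (goldenRatio ^ 2) ^ (k + 1)
      _ = goldenRatio * goldenRatio ^ (2 * k + 1) := by rw [← pow_mul, ← pow_succ', mul_add]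
      _ ≤ goldenRatio * (goldenRatio ^ 2 * Nat.fib (2 * k + 1)) := by
        gcongr; exact goldenRatio_pow_succ_le_sq_mul_fib (2 * k)
      _ ≤ goldenRatio ^ 3 * (LWords lazyRenewal (k + 1) n).ncard := by
        rw [← mul_assoc, ← pow_succ']
        gcongr
        exact_mod_cast fib_le_ncard_LWords_lazyRenewal k n
  · calc ((LWords lazyRenewal (k + 1) n).ncard : ℝ)
      _ ≤ n * Nat.fib (2 * k + 2) := by exact_mod_cast ncard_LWords_lazyRenewal_le k n
      _ ≤ n * goldenRatio ^ (2 * k + 1) := by gcongr; exact fib_succ_le_goldenRatio_pow _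
      _ ≤ n * (goldenRatio ^ 2) ^ (k + 1) := by
        rw [← pow_mul]
        gcongr
        · exact one_lt_goldenRatio.le
        · omega
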